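/- Let (W,S) be a Coxeter system, τ, φ ∈ W, and W₁, W₂ standard parabolic subgroups of W. Consider the set W₁ I(τ⁻¹) φ W₂ = { a x φ b : a ∈ W₁, x ≤ τ⁻¹, b ∈ W₂ }. Then: (1) if τ′, φ′ ∈ W satisfy τW₁ = τ′W₁ and φW₂ = φ′W₂, then W₁ I(τ′⁻¹) φ′ W₂ = W₁ I(τ⁻¹) φ W₂; and (2) the set W₁ I(τ⁻¹) φ W₂ has a unique minimal element in the Bruhat order. -/

import Mathlib

variable {B W : Type*} [Group W] {M : CoxeterMatrix B}

/-- The (strong) Bruhat order on the Coxeter group `W`: `u ≤ v` if and only if some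
reduced word for `v` admits a sublist whose product is `u`. -/
def BruhatLE (cs : CoxeterSystem M W) (u v : W) : Prop :=
  ∃ ω : List B, cs.IsReduced ω ∧ cs.wordProd ω = v ∧
    ∃ ω' : List B, ω'.Sublist ω ∧ cs.wordProd ω' = u

/-- The strict Bruhat order. -/
def BruhatLT (cs : CoxeterSystem M W) (u v : W) : Prop :=
  BruhatLE cs u v ∧ u ≠ v

/-- `m` is the unique minimal element of `K` in the Bruhat order, i.e. `m ∈ K` and
`m` is Bruhat-below every element of `K`. -/
def IsBrMin (cs : CoxeterSystem M W) (K : Set W) (m : W) : Prop :=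
  m ∈ K ∧ ∀ x ∈ K, BruhatLE cs m x

/-- `m` is the unique maximal element of `K` in the Bruhat order, i.e. `m ∈ K` and
`m` is Bruhat-above every element of `K`. -/
def IsBrMax (cs : CoxeterSystem M W) (K : Set W) (m : W) : Prop :=
  m ∈ K ∧ ∀ x ∈ K, BruhatLE cs x m

/-- A standard parabolic subgroup: a subgroup generated by a subset of the simple
reflections. -/
def IsStdParabolic (cs : CoxeterSystem M W) (P : Subgroup W) : Prop :=
  ∃ X : Set B, P = Subgroup.closure (cs.simple '' X)

/-- The left coset `u•W₁ = {u * b : b ∈ W₁}`. -/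
def lCoset (W₁ : Subgroup W) (u : W) : Set W := {x | ∃ b ∈ W₁, x = u * b}

/-- The double coset `W₁ u W₂ = {a * u * b : a ∈ W₁, b ∈ W₂}`. -/
def dblCoset (W₁ W₂ : Subgroup W) (u : W) : Set W :=
  {x | ∃ a ∈ W₁, ∃ b ∈ W₂, x = a * u * b}

/-- The set `W₁ I(τ⁻¹) φ W₂ = { a x φ b : a ∈ W₁, x ≤ τ⁻¹, b ∈ W₂ }`. -/
def KKset (cs : CoxeterSystem M W) (W₁ W₂ : Subgroup W) (τ φ : W) : Set W :=
  {z | ∃ a ∈ W₁, ∃ x, BruhatLE cs x τ⁻¹ ∧ ∃ b ∈ W₂, z = a * x * φ * b}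

/-!
The argument rests on the strong exchange property, obtained from the reflection cocycle of
Björner–Brenti: letting `s i` act on `W × ℤˣ` by `(t, ε) ↦ (s i t s i, ±ε)`, with the sign
flipped exactly when `t = s i`, respects the Coxeter relations, and the sign `inversionSign w t`
that `w` attaches to a reflection `t` is `-1` exactly when `ℓ (w t) < ℓ w`. Strong exchange
identifies the subword definition of the Bruhat order with the one by chains of reflections; this
gives transitivity, the subword property for arbitrary words, and the lifting property: `u ≤ s v`
implies `u ≤ v` or `s u ≤ v`.

(1) By lifting, `W₁ I(v) = W₁ I(s v)` for every simple `s ∈ W₁`, so `W₁ I(τ⁻¹)` only depends on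
`τ W₁`; the dependence on `φ W₂` is trivial.

(2) Folding a reduced word `s₁ ⋯ sₖ` of `τ⁻¹` from the right, starting from `φ` and replacing the
current element `m` by `sⱼ m` whenever `sⱼ` is a left descent of `m`, yields the minimum of
`I(τ⁻¹) φ`. Below it, an element `w` of minimal length in its double coset has no left descents in
`W₁` and no right descents in `W₂`, and for such `w`, lifting shows that `w ≤ y` implies
`w ≤ a y b` for all `a ∈ W₁`, `b ∈ W₂`.
-/

section

variable (cs : CoxeterSystem M W)

local prefix:100 "s " => cs.simple
local prefix:100 "π " => cs.wordProd
local prefix:100 "ℓ " => cs.length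
local prefix:100 "ris " => cs.rightInvSeq

namespace CoxeterSystem

open List
open scoped Classical

noncomputable def signPerm (i : B) : Equiv.Perm (W × ℤˣ) :=
  Function.Involutive.toPerm (fun p ↦ (s i * p.1 * s i, if p.1 = s i then -p.2 else p.2)) <| by
    rintro ⟨t, ε⟩
    have : s i * t * s i = s i ↔ t = s i := by
      rw [← mul_left_inj (s i), ← mul_right_inj (s i)]
      simp [← mul_assoc, simple_mul_simple_self]
    by_cases ht : t = s i <;> simp [this, ht, ← mul_assoc, simple_mul_simple_self]

theorem signPerm_apply (i : B) (t : W) (ε : ℤˣ) :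
    cs.signPerm i (t, ε) = (s i * t * s i, if t = s i then -ε else ε) := rfl

theorem prod_map_signPerm_apply (ω : List B) (t : W) (ε : ℤˣ) :
    (ω.map cs.signPerm).prod (t, ε) = (π ω * t * (π ω)⁻¹, (-1) ^ (ris ω).count t * ε) := by
  induction ω with
  | nil => simp
  | cons i ω ih =>
    have key : π ω * t * (π ω)⁻¹ = s i ↔ (π ω)⁻¹ * s i * π ω = t := by
      constructor <;> intro h <;> rw [← h] <;> group
    rw [map_cons, prod_cons, Equiv.Perm.mul_apply, ih, signPerm_apply, key, wordProd_cons]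
    simp only [rightInvSeq, count_cons, beq_iff_eq]
    refine Prod.ext ?_ ?_
    · simp only [mul_inv_rev, inv_simple]
      group
    · by_cases h : (π ω)⁻¹ * s i * π ω = t <;> simp [h, pow_succ]

theorem rightInvSeq_alternatingWord (i i' : B) (n : ℕ) :
    ris (alternatingWord i i' n) =
      (range n).map fun k : ℕ ↦ (s i * s i') ^ ((k : ℤ) + 1 - n) * s i' := by
  induction n generalizing i i' with
  | zero => rfl
  | succ n ih =>
    have hsemiconj : SemiconjBy (s i') (s i' * s i) (s i * s i') := by
      simp [SemiconjBy, ← mul_assoc, simple_mul_simple_self]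
    have hconj (p : ℤ) :
        s i' * ((s i' * s i) ^ p * s i) * (s i')⁻¹ = (s i * s i') ^ (p - 1) * s i' := by
      rw [← mul_assoc, hsemiconj.zpow_right p, zpow_sub_one]
      simp [mul_assoc]
    rw [alternatingWord_succ, rightInvSeq_concat, ih, range_succ, map_append, map_map,
      concat_eq_append]
    simp only [Function.comp_def, MulAut.conj_apply, hconj, map_cons, map_nil]
    congr 2
    · ext k
      congr 2
      push_cast
      ring
    · simp

theorem prod_map_alternatingWord_two_mul {G : Type*} [Monoid G] (f : B → G) (i i' : B) (m : ℕ) :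
    ((alternatingWord i i' (2 * m)).map f).prod = (f i * f i') ^ m := by
  induction m with
  | zero => simp [alternatingWord]
  | succ m ih =>
    rw [mul_add_one, alternatingWord_succ', alternatingWord_succ', if_neg (by simp [parity_simps]),
      if_pos (by simp), map_cons, map_cons, prod_cons, prod_cons, ih, pow_succ', mul_assoc]

theorem isLiftable_signPerm : M.IsLiftable cs.signPerm := by
  intro i i'
  -- The right inversion sequence of the braid relation word has period `M i i'`, so every
  -- reflection occurs in it an even number of times.
  rw [← prod_map_alternatingWord_two_mul]
  ext ⟨t, ε⟩ : 1
  have hprod : π (alternatingWord i i' (2 * M i i')) = 1 := by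
    simp [prod_alternatingWord_eq_mul_pow, simple_mul_simple_pow]
  set L := (range (M i i')).map fun k : ℕ ↦
    (s i * s i') ^ ((k : ℤ) + 1 - (M i i' + M i i' : ℕ)) * s i'
  have hL : ris (alternatingWord i i' (2 * M i i')) = L ++ L := by
    rw [rightInvSeq_alternatingWord, two_mul, range_add, map_append, map_map]
    congr 1
    refine map_congr_left fun k _ ↦ ?_
    have : ((M i i' + k : ℕ) : ℤ) + 1 - (M i i' + M i i' : ℕ) =
        M i i' + ((k : ℤ) + 1 - (M i i' + M i i' : ℕ)) := by
      push_cast; ring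
    rw [Function.comp_apply, this, zpow_add, zpow_natCast, simple_mul_simple_pow, one_mul]
  rw [prod_map_signPerm_apply, hprod, hL, count_append, ← two_mul, pow_mul]
  simp

noncomputable def signRep : W →* Equiv.Perm (W × ℤˣ) :=
  cs.lift ⟨cs.signPerm, cs.isLiftable_signPerm⟩

theorem signRep_wordProd (ω : List B) : cs.signRep (π ω) = (ω.map cs.signPerm).prod := by
  rw [wordProd, map_list_prod, map_map]
  exact congrArg prod (map_congr_left fun i _ ↦ cs.lift_apply_simple cs.isLiftable_signPerm i)

noncomputable def inversionSign (w t : W) : ℤˣ := (cs.signRep w (t, 1)).2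

theorem inversionSign_wordProd (ω : List B) (t : W) :
    cs.inversionSign (π ω) t = (-1) ^ (ris ω).count t := by
  rw [inversionSign, signRep_wordProd, prod_map_signPerm_apply, mul_one]

theorem signRep_apply (w t : W) (ε : ℤˣ) :
    cs.signRep w (t, ε) = (w * t * w⁻¹, cs.inversionSign w t * ε) := by
  obtain ⟨ω, rfl⟩ := cs.wordProd_surjective w
  rw [signRep_wordProd, prod_map_signPerm_apply, inversionSign_wordProd]

theorem inversionSign_mul (u v t : W) :
    cs.inversionSign (u * v) t = cs.inversionSign v t * cs.inversionSign u (v * t * v⁻¹) := by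
  have h : cs.signRep (u * v) (t, 1) = cs.signRep u (cs.signRep v (t, 1)) := by
    rw [map_mul, Equiv.Perm.mul_apply]
  rw [signRep_apply, signRep_apply, signRep_apply] at h
  simpa only [mul_one, mul_comm (cs.inversionSign u _)] using congrArg Prod.snd h

theorem inversionSign_one (t : W) : cs.inversionSign 1 t = 1 := by
  rw [← wordProd_nil, inversionSign_wordProd, rightInvSeq_nil, count_nil, pow_zero]

theorem inversionSign_simple (i : B) (t : W) :
    cs.inversionSign (s i) t = if t = s i then -1 else 1 := by
  rw [← wordProd_singleton, inversionSign_wordProd, rightInvSeq_singleton]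
  by_cases h : t = s i <;> simp [h, eq_comm]

theorem inversionSign_self {t : W} (ht : cs.IsReflection t) : cs.inversionSign t t = -1 := by
  obtain ⟨w, i, rfl⟩ := ht
  have hconj : w⁻¹ * (w * s i * w⁻¹) * w⁻¹⁻¹ = s i := by group
  have hcancel := cs.inversionSign_mul w w⁻¹ (w * s i * w⁻¹)
  rw [mul_inv_cancel, inversionSign_one, hconj] at hcancel
  calc cs.inversionSign (w * s i * w⁻¹) (w * s i * w⁻¹)
      = cs.inversionSign w⁻¹ (w * s i * w⁻¹) *
          (cs.inversionSign (s i) (s i) * cs.inversionSign w (s i)) := by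
        rw [cs.inversionSign_mul (w * s i), hconj, inversionSign_mul, inv_simple,
          simple_mul_simple_cancel_right]
    _ = -1 := by rw [inversionSign_simple, if_pos rfl, mul_left_comm, ← hcancel, mul_one]

theorem mem_rightInvSeq_of_inversionSign_eq_neg_one {ω : List B} {t : W}
    (h : cs.inversionSign (π ω) t = -1) : t ∈ ris ω := by
  rw [inversionSign_wordProd] at h
  refine count_pos_iff.mp (Nat.pos_of_ne_zero fun h0 ↦ ?_)
  rw [h0, pow_zero] at h
  exact absurd h (by decide)

theorem isRightInversion_of_inversionSign_eq_neg_one {w t : W}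
    (h : cs.inversionSign w t = -1) : cs.IsRightInversion w t := by
  obtain ⟨ω, hω, rfl⟩ := cs.exists_isReduced w
  exact cs.isRightInversion_of_mem_rightInvSeq hω (cs.mem_rightInvSeq_of_inversionSign_eq_neg_one h)

theorem inversionSign_eq_neg_one_of_isRightInversion {w t : W} (h : cs.IsRightInversion w t) :
    cs.inversionSign w t = -1 := by
  refine (Int.units_eq_one_or _).resolve_left fun h1 ↦ ?_
  have hwt : cs.inversionSign (w * t) t = -1 := by
    rw [inversionSign_mul, h.1.mul_self, one_mul, h.1.inv, h1, inversionSign_self cs h.1, mul_one]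
  have := (cs.isRightInversion_of_inversionSign_eq_neg_one hwt).2
  rw [mul_assoc, h.1.mul_self, mul_one] at this
  exact lt_asymm this h.2

theorem exists_eraseIdx_eq_mul_of_isRightInversion {ω : List B} {t : W}
    (h : cs.IsRightInversion (π ω) t) : ∃ j < ω.length, π ω * t = π (ω.eraseIdx j) := by
  obtain ⟨j, hj, rfl⟩ :=
    mem_iff_getElem.mp (cs.mem_rightInvSeq_of_inversionSign_eq_neg_one
      (cs.inversionSign_eq_neg_one_of_isRightInversion h))
  rw [length_rightInvSeq] at hj
  exact ⟨j, hj, by rw [← getD_eq_getElem _ 1, wordProd_mul_getD_rightInvSeq]⟩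

def BruhatStep (x y : W) : Prop := ∃ t, cs.IsReflection t ∧ y = x * t ∧ ℓ x < ℓ y

def ChainLE : W → W → Prop := Relation.ReflTransGen cs.BruhatStep

variable {cs}

theorem ChainLE.refl (x : W) : cs.ChainLE x x := Relation.ReflTransGen.refl

theorem ChainLE.trans {x y z : W} (h₁ : cs.ChainLE x y) (h₂ : cs.ChainLE y z) : cs.ChainLE x z :=
  Relation.ReflTransGen.trans h₁ h₂

theorem BruhatStep.chainLE {x y : W} (h : cs.BruhatStep x y) : cs.ChainLE x y :=
  Relation.ReflTransGen.single h

theorem chainLE_simple_mul {x : W} {i : B} (h : ℓ x < ℓ (s i * x)) : cs.ChainLE x (s i * x) :=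
  BruhatStep.chainLE ⟨x⁻¹ * s i * x, by simpa using (cs.isReflection_simple i).conj x⁻¹,
    by group, h⟩

theorem simple_mul_chainLE {x : W} {i : B} (h : ℓ (s i * x) < ℓ x) : cs.ChainLE (s i * x) x := by
  have := chainLE_simple_mul (cs := cs) (x := s i * x) (i := i)
  rwa [simple_mul_simple_cancel_left, imp_iff_right h] at this

theorem ChainLE.exists_sublist {u v : W} (h : cs.ChainLE u v) {α : List B} (hα : π α = v) :
    ∃ α', α' <+ α ∧ π α' = u := by
  induction h generalizing α with
  | refl => exact ⟨α, Sublist.refl α, hα⟩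
  | tail _ hstep ih =>
    obtain ⟨t, ht, rfl, hlt⟩ := hstep
    have hinv : cs.IsRightInversion (π α) t :=
      ⟨ht, by rwa [hα, mul_assoc, ht.mul_self, mul_one]⟩
    obtain ⟨j, -, hj⟩ := cs.exists_eraseIdx_eq_mul_of_isRightInversion hinv
    obtain ⟨α', hα', rfl⟩ := ih (by rw [← hj, hα, mul_assoc, ht.mul_self, mul_one])
    exact ⟨α', hα'.trans (eraseIdx_sublist α j), rfl⟩

theorem BruhatStep.simple_mul_or {x y : W} (h : cs.BruhatStep x y) (i : B) :
    cs.ChainLE (s i * x) y ∨ cs.ChainLE (s i * x) (s i * y) := by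
  obtain ⟨t, ht, rfl, hlt⟩ := h
  rcases lt_or_gt_of_ne (ht.length_mul_left_ne (s i * x)) with hxt | hxt
  · have hsign := cs.inversionSign_eq_neg_one_of_isRightInversion ⟨ht, hxt⟩
    have hx : cs.inversionSign x t = 1 := (Int.units_eq_one_or _).resolve_right fun h ↦
      (cs.isRightInversion_of_inversionSign_eq_neg_one h).2.not_gt hlt
    rw [inversionSign_mul, hx, one_mul, inversionSign_simple] at hsign
    have hconj : x * t * x⁻¹ = s i := by_contra fun hne ↦ by simp [hne] at hsign
    have : s i * x = x * t := by rw [← hconj]; group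
    exact .inl (this ▸ .refl _)
  · exact .inr (BruhatStep.chainLE ⟨t, ht, (mul_assoc ..).symm, by rwa [← mul_assoc]⟩)

theorem ChainLE.simple_mul_or {x y : W} (h : cs.ChainLE x y) (i : B) :
    cs.ChainLE (s i * x) y ∨ cs.ChainLE (s i * x) (s i * y) := by
  induction h with
  | refl => exact .inr (.refl _)
  | tail _ hstep ih =>
    rcases ih with h | h
    · exact .inl (h.trans hstep.chainLE)
    · exact (hstep.simple_mul_or i).imp h.trans h.trans

theorem chainLE_of_sublist {ω ω' : List B} (hω : cs.IsReduced ω) (h : ω' <+ ω) :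
    cs.ChainLE (π ω') (π ω) := by
  induction ω generalizing ω' with
  | nil => rw [sublist_nil.mp h]; exact .refl _
  | cons i ω ih =>
    have hω₀ : cs.IsReduced ω := by simpa using hω.drop 1
    have hlt : ℓ (π ω) < ℓ (s i * π ω) := by
      have := hω.eq
      rw [wordProd_cons, length_cons, ← hω₀.eq] at this
      omega
    rw [wordProd_cons]
    rcases sublist_cons_iff.mp h with h | ⟨ω₁, rfl, h₁⟩
    · exact (ih hω₀ h).trans (chainLE_simple_mul hlt)
    · rw [wordProd_cons]
      exact ((ih hω₀ h₁).simple_mul_or i).elim (·.trans (chainLE_simple_mul hlt)) id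

theorem bruhatLE_iff_chainLE {u v : W} : BruhatLE cs u v ↔ cs.ChainLE u v := by
  constructor
  · rintro ⟨ω, hω, rfl, ω', h, rfl⟩
    exact chainLE_of_sublist hω h
  · intro h
    obtain ⟨ω, hω, rfl⟩ := cs.exists_isReduced v
    obtain ⟨ω', h', rfl⟩ := h.exists_sublist rfl
    exact ⟨ω, hω, rfl, ω', h', rfl⟩

theorem bruhatLE_simple_mul {v : W} {i : B} (h : ℓ v < ℓ (s i * v)) : BruhatLE cs v (s i * v) :=
  bruhatLE_iff_chainLE.mpr (chainLE_simple_mul h)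

theorem simple_mul_bruhatLE {v : W} {i : B} (h : ℓ (s i * v) < ℓ v) : BruhatLE cs (s i * v) v :=
  bruhatLE_iff_chainLE.mpr (simple_mul_chainLE h)

end CoxeterSystem

namespace BruhatLE

open List CoxeterSystem

variable {cs}

protected theorem refl (u : W) : BruhatLE cs u u := bruhatLE_iff_chainLE.mpr (.refl u)

protected theorem trans {u v w : W} (h₁ : BruhatLE cs u v) (h₂ : BruhatLE cs v w) :
    BruhatLE cs u w :=
  bruhatLE_iff_chainLE.mpr ((bruhatLE_iff_chainLE.mp h₁).trans (bruhatLE_iff_chainLE.mp h₂))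

theorem exists_sublist {u v : W} (h : BruhatLE cs u v) {α : List B} (hα : π α = v) :
    ∃ α', α' <+ α ∧ π α' = u :=
  (bruhatLE_iff_chainLE.mp h).exists_sublist hα

protected theorem inv {u v : W} (h : BruhatLE cs u v) : BruhatLE cs u⁻¹ v⁻¹ := by
  obtain ⟨ω, hω, rfl, ω', h, rfl⟩ := h
  exact ⟨ω.reverse, (isReduced_reverse_iff cs ω).mpr hω, wordProd_reverse cs ω,
    ω'.reverse, h.reverse, wordProd_reverse cs ω'⟩

theorem le_or_simple_mul_le {u v : W} {i : B} (h : BruhatLE cs u (s i * v)) :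
    BruhatLE cs u v ∨ BruhatLE cs (s i * u) v := by
  obtain ⟨ω, hω, rfl⟩ := cs.exists_isReduced v
  obtain ⟨α, hα, rfl⟩ := h.exists_sublist (cs.wordProd_cons i ω)
  rcases sublist_cons_iff.mp hα with hα | ⟨α₁, rfl, hα₁⟩
  · exact .inl ⟨ω, hω, rfl, α, hα, rfl⟩
  · exact .inr ⟨ω, hω, rfl, α₁, hα₁, by rw [wordProd_cons, simple_mul_simple_cancel_left]⟩

theorem le_simple_mul {u v : W} {i : B} (h : BruhatLE cs u v) (hu : ℓ u < ℓ (s i * u)) :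
    BruhatLE cs u (s i * v) := by
  have h' : BruhatLE cs u (s i * (s i * v)) := by rwa [simple_mul_simple_cancel_left]
  exact h'.le_or_simple_mul_le.elim id (bruhatLE_simple_mul hu).trans

theorem simple_mul_le_simple_mul {u v : W} {i : B} (h : BruhatLE cs u v)
    (hu : ℓ (s i * u) < ℓ u) : BruhatLE cs (s i * u) (s i * v) := by
  have h' : BruhatLE cs u (s i * (s i * v)) := by rwa [simple_mul_simple_cancel_left]
  exact h'.le_or_simple_mul_le.elim (simple_mul_bruhatLE hu).trans id

theorem le_mul_left_of_forall_not_isLeftDescent {X : Set B} {w v g : W} (h : BruhatLE cs w v)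
    (hw : ∀ i ∈ X, ¬cs.IsLeftDescent w i) (hg : g ∈ Subgroup.closure (cs.simple '' X)) :
    BruhatLE cs w (g * v) := by
  have hlt {i : B} (hi : i ∈ X) : ℓ w < ℓ (s i * w) := by
    have := cs.not_isLeftDescent_iff.mp (hw i hi)
    omega
  induction hg using Subgroup.closure_induction'' generalizing v with
  | mem g hg =>
    obtain ⟨i, hi, rfl⟩ := hg
    exact h.le_simple_mul (hlt hi)
  | inv_mem g hg =>
    obtain ⟨i, hi, rfl⟩ := hg
    simpa [inv_simple] using h.le_simple_mul (hlt hi)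
  | one => rwa [one_mul]
  | mul g g' _ _ ih ih' => rw [mul_assoc]; exact ih (ih' h)

theorem le_mul_right_of_forall_not_isRightDescent {X : Set B} {w v g : W} (h : BruhatLE cs w v)
    (hw : ∀ i ∈ X, ¬cs.IsRightDescent w i) (hg : g ∈ Subgroup.closure (cs.simple '' X)) :
    BruhatLE cs w (v * g) := by
  have hw' : ∀ i ∈ X, ¬cs.IsLeftDescent w⁻¹ i := by simpa [isLeftDescent_inv_iff] using hw
  simpa using (h.inv.le_mul_left_of_forall_not_isLeftDescent hw' (inv_mem hg)).inv

end BruhatLE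

namespace CoxeterSystem

open List

variable {cs}

theorem mul_simple_bruhatLE {v : W} {i : B} (h : cs.IsRightDescent v i) :
    BruhatLE cs (v * s i) v := by
  simpa [inv_simple] using (simple_mul_bruhatLE (cs.isLeftDescent_inv_iff.mpr h)).inv

theorem KKset_mul_simple_subset (W₁ W₂ : Subgroup W) {i : B} (hi : s i ∈ W₁) (τ φ : W) :
    KKset cs W₁ W₂ (τ * s i) φ ⊆ KKset cs W₁ W₂ τ φ := by
  rintro z ⟨a, ha, x, hx, b, hb, rfl⟩
  rw [mul_inv_rev, inv_simple] at hx
  rcases hx.le_or_simple_mul_le with hx | hx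
  · exact ⟨a, ha, x, hx, b, hb, rfl⟩
  · exact ⟨a * s i, mul_mem ha hi, s i * x, hx, b, hb,
      by simp only [mul_assoc, simple_mul_simple_cancel_left]⟩

theorem KKset_mul_simple (W₁ W₂ : Subgroup W) {i : B} (hi : s i ∈ W₁) (τ φ : W) :
    KKset cs W₁ W₂ (τ * s i) φ = KKset cs W₁ W₂ τ φ := by
  refine (KKset_mul_simple_subset W₁ W₂ hi τ φ).antisymm ?_
  simpa only [simple_mul_simple_cancel_right] using KKset_mul_simple_subset W₁ W₂ hi (τ * s i) φ

theorem KKset_mul_mem_left {W₁ : Subgroup W} (W₂ : Subgroup W) (h₁ : IsStdParabolic cs W₁)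
    {g : W} (hg : g ∈ W₁) (τ φ : W) : KKset cs W₁ W₂ (τ * g) φ = KKset cs W₁ W₂ τ φ := by
  obtain ⟨X, rfl⟩ := h₁
  induction hg using Subgroup.closure_induction generalizing τ with
  | mem g hg =>
    obtain ⟨i, hi, rfl⟩ := hg
    exact KKset_mul_simple _ _ (Subgroup.subset_closure (Set.mem_image_of_mem _ hi)) τ φ
  | one => rw [mul_one]
  | mul g g' _ _ ih ih' => rw [← mul_assoc, ih', ih]
  | inv g _ ih => rw [← ih (τ * g⁻¹), inv_mul_cancel_right]

theorem KKset_mul_mem_right (W₁ : Subgroup W) {W₂ : Subgroup W} {g : W} (hg : g ∈ W₂)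
    (τ φ : W) : KKset cs W₁ W₂ τ (φ * g) = KKset cs W₁ W₂ τ φ := by
  ext z
  constructor
  · rintro ⟨a, ha, x, hx, b, hb, rfl⟩
    exact ⟨a, ha, x, hx, g * b, mul_mem hg hb, by group⟩
  · rintro ⟨a, ha, x, hx, b, hb, rfl⟩
    exact ⟨a, ha, x, hx, g⁻¹ * b, mul_mem (inv_mem hg) hb, by group⟩

theorem exists_min_sublist_wordProd_mul (φ : W) (ω : List B) :
    ∃ ω', ω' <+ ω ∧ ∀ ω'', ω'' <+ ω → BruhatLE cs (π ω' * φ) (π ω'' * φ) := by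
  induction ω with
  | nil => exact ⟨[], .slnil, fun ω'' h ↦ by rw [sublist_nil.mp h]; exact .refl _⟩
  | cons i ω ih =>
    obtain ⟨ω', hω', hmin⟩ := ih
    by_cases hi : cs.IsLeftDescent (π ω' * φ) i
    · refine ⟨i :: ω', hω'.cons_cons i, fun ω'' h ↦ ?_⟩
      rw [wordProd_cons, mul_assoc]
      rcases sublist_cons_iff.mp h with h | ⟨ω₁, rfl, h₁⟩
      · exact (simple_mul_bruhatLE hi).trans (hmin ω'' h)
      · rw [wordProd_cons, mul_assoc]
        exact (hmin ω₁ h₁).simple_mul_le_simple_mul hi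
    · refine ⟨ω', hω'.cons i, fun ω'' h ↦ ?_⟩
      rcases sublist_cons_iff.mp h with h | ⟨ω₁, rfl, h₁⟩
      · exact hmin ω'' h
      · rw [wordProd_cons, mul_assoc]
        exact (hmin ω₁ h₁).le_simple_mul (by have := cs.not_isLeftDescent_iff.mp hi; omega)

theorem exists_mem_dblCoset_bruhatLE_not_isDescent {W₁ W₂ : Subgroup W} {X₁ X₂ : Set B}
    (hX₁ : ∀ i ∈ X₁, s i ∈ W₁) (hX₂ : ∀ i ∈ X₂, s i ∈ W₂) (u : W) :
    ∃ w ∈ dblCoset W₁ W₂ u, BruhatLE cs w u ∧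
      (∀ i ∈ X₁, ¬cs.IsLeftDescent w i) ∧ ∀ i ∈ X₂, ¬cs.IsRightDescent w i := by
  obtain ⟨w, ⟨⟨a, ha, b, hb, rfl⟩, hwu⟩, hmin⟩ :=
    (measure cs.length).wf.has_min {w | w ∈ dblCoset W₁ W₂ u ∧ BruhatLE cs w u}
      ⟨u, ⟨1, one_mem _, 1, one_mem _, by group⟩, .refl u⟩
  refine ⟨_, ⟨a, ha, b, hb, rfl⟩, hwu, fun i hi hdesc ↦ ?_, fun i hi hdesc ↦ ?_⟩
  · refine hmin _ ⟨⟨s i * a, mul_mem (hX₁ i hi) ha, b, hb, by group⟩, ?_⟩ hdesc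
    exact (simple_mul_bruhatLE hdesc).trans hwu
  · refine hmin _ ⟨⟨a, ha, b * s i, mul_mem hb (hX₂ i hi), by group⟩, ?_⟩ hdesc
    exact (mul_simple_bruhatLE hdesc).trans hwu

theorem exists_isBrMin_KKset {W₁ W₂ : Subgroup W} (h₁ : IsStdParabolic cs W₁)
    (h₂ : IsStdParabolic cs W₂) (τ φ : W) : ∃ m, IsBrMin cs (KKset cs W₁ W₂ τ φ) m := by
  obtain ⟨X₁, rfl⟩ := h₁
  obtain ⟨X₂, rfl⟩ := h₂
  obtain ⟨ω, hω, hωτ⟩ := cs.exists_isReduced τ⁻¹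
  obtain ⟨ω', hω', hmin⟩ := exists_min_sublist_wordProd_mul (cs := cs) φ ω
  obtain ⟨m, ⟨a, ha, b, hb, rfl⟩, hm, hm₁, hm₂⟩ := exists_mem_dblCoset_bruhatLE_not_isDescent
    (fun i hi ↦ Subgroup.subset_closure (Set.mem_image_of_mem _ hi))
    (fun i hi ↦ Subgroup.subset_closure (Set.mem_image_of_mem _ hi)) (π ω' * φ)
  refine ⟨a * (π ω' * φ) * b, ⟨a, ha, π ω', ⟨ω, hω, hωτ.symm, ω', hω', rfl⟩, b, hb, by group⟩, ?_⟩
  rintro _ ⟨a', ha', x, hx, b', hb', rfl⟩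
  obtain ⟨ω'', hω'', rfl⟩ := hx.exists_sublist hωτ.symm
  have hle : BruhatLE cs (a * (π ω' * φ) * b) (π ω'' * φ) := hm.trans (hmin ω'' hω'')
  simpa only [mul_assoc] using
    (hle.le_mul_right_of_forall_not_isRightDescent hm₂ hb').le_mul_left_of_forall_not_isLeftDescent
      hm₁ ha'

end CoxeterSystem

end

/-- Let `τ, φ ∈ W` and `W₁, W₂` standard parabolic subgroups.  (1) The set
`W₁ I(τ⁻¹) φ W₂` depends only on the cosets `τW₁` and `φW₂`: if `τW₁ = τ′W₁` and
`φW₂ = φ′W₂` then `W₁ I(τ′⁻¹) φ′ W₂ = W₁ I(τ⁻¹) φ W₂`.  (2) The set `W₁ I(τ⁻¹) φ W₂`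
has a unique minimal element in the Bruhat order. -/
theorem stmt_15 (cs : CoxeterSystem M W) (W₁ W₂ : Subgroup W)
    (h₁ : IsStdParabolic cs W₁) (h₂ : IsStdParabolic cs W₂) (τ φ : W) :
    (∀ τ' φ' : W, τ⁻¹ * τ' ∈ W₁ → φ⁻¹ * φ' ∈ W₂ →
      KKset cs W₁ W₂ τ' φ' = KKset cs W₁ W₂ τ φ) ∧
    (∃ m : W, IsBrMin cs (KKset cs W₁ W₂ τ φ) m) := by
  refine ⟨fun τ' φ' hτ hφ ↦ ?_, CoxeterSystem.exists_isBrMin_KKset h₁ h₂ τ φ⟩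
  rw [← mul_inv_cancel_left τ τ', ← mul_inv_cancel_left φ φ',
    CoxeterSystem.KKset_mul_mem_left W₂ h₁ hτ, CoxeterSystem.KKset_mul_mem_right W₁ hφ]
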